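/- Let q' = p^f. For each 0 ≤ l < q', let ρ̄_l denote the restriction to SL_2(F_{q'}) of the representation ρ_l^I = ρ_{l_0} ⊗ ρ_{l_1}^{(1)} ⊗ ... ⊗ ρ_{l_s}^{(s)} over F_{q'}, where l = l_0 + l_1 p + ... + l_s p^s is the base-p expansion. Then ρ̄_l is irreducible. -/

import Mathlib

open Polynomial

/-- The matrix of the `r`-th symmetric power `ρ_r` of the tautological representation of
`GL_2(B)`, in the basis `X^{r-i}Y^i`. -/
noncomputable def symPowMat {B : Type*} [CommRing B] (r : ℕ) (g : Matrix (Fin 2) (Fin 2) B) :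
    Matrix (Fin (r + 1)) (Fin (r + 1)) B :=
  Matrix.of fun j i =>
    (((C (g 0 0)) * X + C (g 1 0)) ^ (r - (i : ℕ)) *
        ((C (g 0 1)) * X + C (g 1 1)) ^ (i : ℕ)).coeff (r - (j : ℕ))

/-- Index set of `ρ_l^I = ρ_{l_0} ⊗ ρ_{l_1}^{(1)} ⊗ ⋯ ⊗ ρ_{l_s}^{(s)}`. -/
abbrev tensorIdx (p l : ℕ) := (i : Fin (Nat.digits p l).length) → Fin ((Nat.digits p l).get i + 1)

/-- The matrix of `ρ_l^I = ρ_{l_0} ⊗ ρ_{l_1}^{(1)} ⊗ ⋯ ⊗ ρ_{l_s}^{(s)}` (Frobenius twists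
entrywise by `p^i`-th powers). -/
noncomputable def rhoTensor {B : Type*} [CommRing B] (p l : ℕ) (g : Matrix (Fin 2) (Fin 2) B) :
    Matrix (tensorIdx p l) (tensorIdx p l) B :=
  Matrix.of fun j i =>
    ∏ k : Fin (Nat.digits p l).length,
      symPowMat ((Nat.digits p l).get k) (g.map (· ^ p ^ (k : ℕ))) (j k) (i k)

/-!
Give a basis index `i`, a digit vector `i ≤ (l₀, …, l_s)`, the weight `wt i = ∑ iₖ pᵏ`; as the
digits are `< p`, `wt` is injective, with maximum `l` at the top index `⊤`. The lower and upper
unipotents act by matrices with entries `a j i * x ^ (wt j - wt i)` (supported on `i ≤ j`) and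
`b j i * x ^ (wt i - wt j)`. Since `l < q'`, Vandermonde interpolation in `x` shows that an
invariant subspace `V` is stable under each homogeneous part in `x`. If `0 ≠ v ∈ V` and `i₀` has
least weight in the support of `v`, the lower part of degree `l - wt i₀` maps `v` to a nonzero
multiple of `e_⊤`; the upper part of degree `l - wt j` maps `e_⊤` to `b j ⊤ • e_j`, and
`b j ⊤ = ∏ₖ (lₖ choose jₖ)` is nonzero in characteristic `p` because `lₖ < p`.
-/

open Finset Matrix

theorem Submodule.mem_of_forall_sum_pow_smul_mem {F M : Type*} [Field F] [Fintype F]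
    [AddCommGroup M] [Module F M] (V : Submodule F M) {N : ℕ} (hN : N < Fintype.card F)
    (w : ℕ → M) (h : ∀ x : F, ∑ d ∈ range (N + 1), x ^ d • w d ∈ V) {d : ℕ} (hd : d ≤ N) :
    w d ∈ V := by
  obtain ⟨nodes⟩ : Nonempty (Fin (N + 1) ↪ F) :=
    Function.Embedding.nonempty_of_card_le (by simpa using hN)
  let φ := Fintype.linearCombination F fun d : Fin (N + 1) => w d
  have hrows : LinearIndependent F (vandermonde (nodes ·)).row :=
    linearIndependent_rows_of_isUnit <| (isUnit_iff_isUnit_det _).mpr <|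
      isUnit_iff_ne_zero.mpr <| det_vandermonde_ne_zero_iff.mpr nodes.injective
  have hspan : Submodule.span F (Set.range (vandermonde (nodes ·)).row) = ⊤ :=
    hrows.span_eq_top_of_card_eq_finrank (by simp)
  have hcomap : ⊤ ≤ V.comap φ := by
    rw [← hspan, Submodule.span_le]
    rintro _ ⟨a, rfl⟩
    simpa [φ, Fintype.linearCombination_apply, vandermonde_apply, sum_range]
      using h (nodes a)
  simpa [φ] using hcomap (Submodule.mem_top (x := Pi.single (⟨d, by omega⟩ : Fin (N + 1)) 1))

namespace Matrix

variable {ι R : Type*}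

def gradedPart [Zero R] (a : Matrix ι ι R) (e : ι → ι → ℕ) (d : ℕ) : Matrix ι ι R :=
  of fun j i => if e j i = d then a j i else 0

lemma of_mul_pow_eq_sum_gradedPart [CommSemiring R] (a : Matrix ι ι R) (e : ι → ι → ℕ) {N : ℕ}
    (he : ∀ j i, e j i ≤ N) (x : R) :
    (of fun j i => a j i * x ^ e j i) = ∑ d ∈ range (N + 1), x ^ d • gradedPart a e d := by
  ext j i
  simp only [gradedPart, of_apply, sum_apply, smul_apply, smul_eq_mul, mul_ite, mul_zero]
  rw [Finset.sum_ite_eq, if_pos (mem_range.mpr (Nat.lt_succ_of_le (he j i))), mul_comm]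

lemma gradedPart_mulVec_apply [NonUnitalNonAssocSemiring R] [Fintype ι] (a : Matrix ι ι R)
    (e : ι → ι → ℕ) (d : ℕ) (v : ι → R) (j : ι) :
    (gradedPart a e d *ᵥ v) j = ∑ i, if e j i = d then a j i * v i else 0 := by
  simp only [gradedPart, mulVec, dotProduct, of_apply, ite_mul, zero_mul]

lemma gradedPart_mulVec_mem {F : Type*} [Field F] [Fintype F] [Fintype ι]
    (V : Submodule F (ι → F)) (a : Matrix ι ι F)
    (e : ι → ι → ℕ) {N : ℕ} (he : ∀ j i, e j i ≤ N) (hN : N < Fintype.card F)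
    (hV : ∀ x : F, ∀ v ∈ V, (of fun j i => a j i * x ^ e j i) *ᵥ v ∈ V)
    {v : ι → F} (hv : v ∈ V) {d : ℕ} (hd : d ≤ N) : gradedPart a e d *ᵥ v ∈ V :=
  V.mem_of_forall_sum_pow_smul_mem hN (fun d => gradedPart a e d *ᵥ v) (fun x => by
    simpa only [of_mul_pow_eq_sum_gradedPart a e he, sum_mulVec, smul_mulVec] using hV x v hv) hd

end Matrix

section HighestWeight

variable {F ι : Type*} [Field F] [Fintype F] [Fintype ι] [DecidableEq ι]
  {V : Submodule F (ι → F)} {wt : ι → ℕ} {top : ι}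

theorem Submodule.single_top_mem_of_weight_raising (hwt : Function.Injective wt)
    (htop : ∀ i, wt i ≤ wt top) (hcard : wt top < Fintype.card F) (a : Matrix ι ι F)
    (ha : ∀ j i, a j i ≠ 0 → wt i ≤ wt j) (ha_top : ∀ i, a top i ≠ 0)
    (hV : ∀ x : F, ∀ v ∈ V, (of fun j i => a j i * x ^ (wt j - wt i)) *ᵥ v ∈ V)
    {v : ι → F} (hv : v ∈ V) (hv0 : v ≠ 0) : Pi.single top 1 ∈ V := by
  classical
  obtain ⟨i₀, hi₀, hmin⟩ := exists_min_image (univ.filter (v · ≠ 0)) wt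
    (by simpa [Finset.Nonempty, Function.ne_iff] using hv0)
  simp only [mem_filter, mem_univ, true_and] at hi₀ hmin
  -- By minimality of `wt i₀`, the part of degree `wt top - wt i₀` only sees the entry `(top, i₀)`.
  have hsupport : ∀ j i, wt j - wt i = wt top - wt i₀ → a j i * v i ≠ 0 → j = top ∧ i = i₀ := by
    intro j i hd hne
    have := ha j i (left_ne_zero_of_mul hne)
    have := hmin i (right_ne_zero_of_mul hne)
    have := htop j
    exact ⟨hwt (by omega), hwt (by omega)⟩
  have hterm : ∀ j i, (if wt j - wt i = wt top - wt i₀ then a j i * v i else 0) =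
      if j = top ∧ i = i₀ then a top i₀ * v i₀ else 0 := by
    intro j i
    by_cases h : j = top ∧ i = i₀
    · obtain ⟨rfl, rfl⟩ := h
      simp
    · rw [if_neg h, ite_eq_right_iff]
      intro hd
      by_contra hne
      exact h (hsupport j i hd hne)
  have hpart : gradedPart a (fun j i => wt j - wt i) (wt top - wt i₀) *ᵥ v =
      (a top i₀ * v i₀) • Pi.single top 1 := by
    ext j
    rw [gradedPart_mulVec_apply]
    simp_rw [hterm]
    by_cases hj : j = top <;> simp [hj]
  rw [← V.smul_mem_iff (mul_ne_zero (ha_top i₀) hi₀), ← hpart]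
  exact gradedPart_mulVec_mem V a _ (fun j i => (Nat.sub_le _ _).trans (htop j)) hcard hV hv
    (Nat.sub_le _ _)

theorem Submodule.eq_top_of_weight_lowering (hwt : Function.Injective wt)
    (htop : ∀ i, wt i ≤ wt top) (hcard : wt top < Fintype.card F) (b : Matrix ι ι F)
    (hb : ∀ j, b j top ≠ 0)
    (hV : ∀ x : F, ∀ v ∈ V, (of fun j i => b j i * x ^ (wt i - wt j)) *ᵥ v ∈ V)
    (h : Pi.single top 1 ∈ V) : V = ⊤ := by
  have hsingle : ∀ j₀, Pi.single j₀ 1 ∈ V := by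
    intro j₀
    have hpart : gradedPart b (fun j i => wt i - wt j) (wt top - wt j₀) *ᵥ Pi.single top 1 =
        b j₀ top • Pi.single j₀ 1 := by
      ext j
      have hweight : wt top - wt j = wt top - wt j₀ ↔ j = j₀ :=
        ⟨fun hd => hwt (by have := htop j; have := htop j₀; omega), fun h => h ▸ rfl⟩
      by_cases hj : j = j₀ <;> simp [gradedPart, hweight, hj]
    rw [← V.smul_mem_iff (hb j₀), ← hpart]
    exact gradedPart_mulVec_mem V b _ (fun j i => (Nat.sub_le _ _).trans (htop i)) hcard hV h
      (Nat.sub_le _ _)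
  rw [eq_top_iff, ← (Pi.basisFun F ι).span_eq, Submodule.span_le]
  rintro _ ⟨j, rfl⟩
  simpa using hsingle j

end HighestWeight

theorem Nat.ofDigits_ofFn (b : ℕ) {n : ℕ} (f : Fin n → ℕ) :
    Nat.ofDigits b (List.ofFn f) = ∑ k, f k * b ^ (k : ℕ) := by
  simp only [Nat.ofDigits_eq_sum_mapIdx, List.mapIdx_eq_ofFn, List.get_ofFn, List.length_ofFn,
    List.sum_ofFn]
  rfl

def tensorIdxWeight (p l : ℕ) (i : tensorIdx p l) : ℕ :=
  ∑ k, (i k : ℕ) * p ^ (k : ℕ)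

lemma tensorIdxWeight_eq_ofDigits (p l : ℕ) (i : tensorIdx p l) :
    tensorIdxWeight p l i = Nat.ofDigits p (List.ofFn fun k => (i k : ℕ)) :=
  (Nat.ofDigits_ofFn p _).symm

lemma tensorIdxWeight_top (p l : ℕ) : tensorIdxWeight p l ⊤ = l := by
  rw [tensorIdxWeight_eq_ofDigits]
  conv_rhs => rw [← Nat.ofDigits_digits p l, ← List.ofFn_get (Nat.digits p l)]
  rfl

lemma tensorIdxWeight_mono (p l : ℕ) : Monotone (tensorIdxWeight p l) := fun _ _ h =>
  Finset.sum_le_sum fun k _ => Nat.mul_le_mul_right _ (h k)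

lemma tensorIdxWeight_injective {p : ℕ} (hp : 1 < p) (l : ℕ) :
    Function.Injective (tensorIdxWeight p l) := by
  intro i j h
  have hdigit : ∀ (i : tensorIdx p l), ∀ d ∈ List.ofFn fun k => (i k : ℕ), d < p := by
    intro i d hd
    obtain ⟨k, rfl⟩ := List.mem_ofFn.mp hd
    exact (Fin.is_le (i k)).trans_lt (Nat.digits_lt_base hp (List.get_mem _ k))
  rw [tensorIdxWeight_eq_ofDigits, tensorIdxWeight_eq_ofDigits] at h
  have := List.ofFn_injective (Nat.ofDigits_inj_of_len_eq hp (by simp) (hdigit i) (hdigit j) h)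
  exact funext fun k => Fin.ext (congrFun this k)

lemma sum_sub_mul_pow_eq_tensorIdxWeight_sub {p l : ℕ} {i j : tensorIdx p l} (h : i ≤ j) :
    ∑ k, ((j k : ℕ) - i k) * p ^ (k : ℕ) = tensorIdxWeight p l j - tensorIdxWeight p l i := by
  rw [eq_tsub_iff_add_eq_of_le (tensorIdxWeight_mono p l h), tensorIdxWeight, tensorIdxWeight,
    ← Finset.sum_add_distrib]
  exact Finset.sum_congr rfl fun k _ => by rw [← Nat.add_mul, Nat.sub_add_cancel (h k)]

section Unipotent

variable {R : Type*} [CommRing R]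

lemma coeff_C_mul_X_add_one_pow (x : R) (n m : ℕ) :
    ((C x * X + 1) ^ n).coeff m = (n.choose m : R) * x ^ m := by
  rw [show (C x * X + 1) ^ n = ((X + 1) ^ n).comp (C x * X) by simp, comp_C_mul_X_coeff,
    coeff_X_add_one_pow]

lemma map_pow_lowerUnipotent (x : R) {e : ℕ} (he : e ≠ 0) :
    (!![1, 0; x, 1] : Matrix (Fin 2) (Fin 2) R).map (· ^ e) = !![1, 0; x ^ e, 1] := by
  ext a b
  fin_cases a <;> fin_cases b <;> simp [he]

lemma symPowMat_lowerUnipotent (r : ℕ) (x : R) (j i : Fin (r + 1)) :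
    symPowMat r !![1, 0; x, 1] j i = ((r - i : ℕ).choose (r - j) : R) * x ^ ((j : ℕ) - i) := by
  have hi := Fin.is_le i
  have hj := Fin.is_le j
  simp only [symPowMat, of_apply, cons_val', cons_val_zero, cons_val_one,
    empty_val', cons_val_fin_one, map_one, map_zero, one_mul, zero_mul,
    zero_add, one_pow, mul_one, coeff_X_add_C_pow]
  rcases le_or_gt (i : ℕ) j with h | h
  · rw [show r - (i : ℕ) - (r - j) = j - i by omega, mul_comm]
  · rw [Nat.choose_eq_zero_of_lt (by omega), Nat.cast_zero, zero_mul, mul_zero]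

lemma map_pow_upperUnipotent (x : R) {e : ℕ} (he : e ≠ 0) :
    (!![1, x; 0, 1] : Matrix (Fin 2) (Fin 2) R).map (· ^ e) = !![1, x ^ e; 0, 1] := by
  ext a b
  fin_cases a <;> fin_cases b <;> simp [he]

lemma symPowMat_upperUnipotent (r : ℕ) (x : R) (j i : Fin (r + 1)) :
    symPowMat r !![1, x; 0, 1] j i = ((i : ℕ).choose j : R) * x ^ ((i : ℕ) - j) := by
  have hi := Fin.is_le i
  have hj := Fin.is_le j
  simp only [symPowMat, of_apply, cons_val', cons_val_zero, cons_val_one,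
    empty_val', cons_val_fin_one, map_one, map_zero, one_mul, add_zero]
  rw [mul_comm, coeff_mul_X_pow', coeff_C_mul_X_add_one_pow]
  rcases le_or_gt (j : ℕ) i with h | h
  · rw [if_pos (by omega), show r - (j : ℕ) - (r - i) = i - j by omega, Nat.choose_symm h]
  · rw [if_neg (by omega), Nat.choose_eq_zero_of_lt h, Nat.cast_zero, zero_mul]

variable (R) in
def rhoLowerCoeff (p l : ℕ) : Matrix (tensorIdx p l) (tensorIdx p l) R :=
  of fun j i => ∏ k, (((Nat.digits p l).get k - i k).choose ((Nat.digits p l).get k - j k) : R)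

variable (R) in
def rhoUpperCoeff (p l : ℕ) : Matrix (tensorIdx p l) (tensorIdx p l) R :=
  of fun j i => ∏ k, ((i k : ℕ).choose (j k) : R)

lemma le_of_rhoLowerCoeff_ne_zero {p l : ℕ} {j i : tensorIdx p l}
    (hc : rhoLowerCoeff R p l j i ≠ 0) : i ≤ j := by
  by_contra h
  apply hc
  obtain ⟨k, hk⟩ : ∃ k, j k < i k := by simpa only [Pi.le_def, not_forall, not_le] using h
  rw [rhoLowerCoeff, of_apply]
  refine prod_eq_zero (mem_univ k) ?_
  have := Fin.is_le (i k)
  rw [Nat.choose_eq_zero_of_lt (by rw [Fin.lt_def] at hk; omega), Nat.cast_zero]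

lemma le_of_rhoUpperCoeff_ne_zero {p l : ℕ} {j i : tensorIdx p l}
    (hc : rhoUpperCoeff R p l j i ≠ 0) : j ≤ i := by
  by_contra h
  apply hc
  obtain ⟨k, hk⟩ : ∃ k, i k < j k := by simpa only [Pi.le_def, not_forall, not_le] using h
  rw [rhoUpperCoeff, of_apply]
  exact prod_eq_zero (mem_univ k) (by rw [Nat.choose_eq_zero_of_lt hk, Nat.cast_zero])

lemma rhoLowerCoeff_top_left (p l : ℕ) (i : tensorIdx p l) : rhoLowerCoeff R p l ⊤ i = 1 := by
  rw [rhoLowerCoeff, of_apply]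
  exact prod_eq_one fun k _ => by simp

lemma rhoUpperCoeff_top_right_ne_zero {F : Type*} [Field F] {p : ℕ} [CharP F p] (hp : p.Prime)
    (l : ℕ) (j : tensorIdx p l) : rhoUpperCoeff F p l j ⊤ ≠ 0 := by
  rw [rhoUpperCoeff, of_apply, prod_ne_zero_iff]
  intro k _
  rw [Ne, CharP.cast_eq_zero_iff F p, Pi.top_apply, Fin.top_eq_last, Fin.val_last]
  exact hp.coprime_iff_not_dvd.mp <| hp.coprime_choose_of_lt
    (Nat.digits_lt_base hp.one_lt (List.get_mem _ k)) (Fin.is_le (j k))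

lemma rhoTensor_lowerUnipotent {p : ℕ} (hp : p ≠ 0) (l : ℕ) (x : R) :
    rhoTensor p l !![1, 0; x, 1] = of fun j i =>
      rhoLowerCoeff R p l j i * x ^ (tensorIdxWeight p l j - tensorIdxWeight p l i) := by
  ext j i
  have hprod : rhoTensor p l !![1, 0; x, 1] j i =
      rhoLowerCoeff R p l j i * x ^ ∑ k, ((j k : ℕ) - i k) * p ^ (k : ℕ) := by
    rw [rhoTensor, rhoLowerCoeff, of_apply, of_apply, ← prod_pow_eq_pow_sum, ← prod_mul_distrib]
    refine prod_congr rfl fun k _ => ?_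
    rw [map_pow_lowerUnipotent x (pow_ne_zero _ hp), symPowMat_lowerUnipotent, ← pow_mul']
  rw [hprod, of_apply]
  by_cases hc : rhoLowerCoeff R p l j i = 0
  · simp [hc]
  · rw [sum_sub_mul_pow_eq_tensorIdxWeight_sub (le_of_rhoLowerCoeff_ne_zero hc)]

lemma rhoTensor_upperUnipotent {p : ℕ} (hp : p ≠ 0) (l : ℕ) (x : R) :
    rhoTensor p l !![1, x; 0, 1] = of fun j i =>
      rhoUpperCoeff R p l j i * x ^ (tensorIdxWeight p l i - tensorIdxWeight p l j) := by
  ext j i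
  have hprod : rhoTensor p l !![1, x; 0, 1] j i =
      rhoUpperCoeff R p l j i * x ^ ∑ k, ((i k : ℕ) - j k) * p ^ (k : ℕ) := by
    rw [rhoTensor, rhoUpperCoeff, of_apply, of_apply, ← prod_pow_eq_pow_sum, ← prod_mul_distrib]
    refine prod_congr rfl fun k _ => ?_
    rw [map_pow_upperUnipotent x (pow_ne_zero _ hp), symPowMat_upperUnipotent, ← pow_mul']
  rw [hprod, of_apply]
  by_cases hc : rhoUpperCoeff R p l j i = 0
  · simp [hc]
  · rw [sum_sub_mul_pow_eq_tensorIdxWeight_sub (le_of_rhoUpperCoeff_ne_zero hc)]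

end Unipotent

/-- Brauer–Nesbitt: for `l < q' = p^f`, the restriction `ρ̄_l` of
`ρ_l^I = ρ_{l_0} ⊗ ρ_{l_1}^{(1)} ⊗ ⋯ ⊗ ρ_{l_s}^{(s)}` to `SL_2(F_{q'})` is irreducible. -/
theorem stmt10 (p : ℕ) (hp : p.Prime) (F : Type*) [Field F] [Fintype F] [CharP F p]
    (l : ℕ) (hl : l < Fintype.card F) :
    ∀ V : Submodule F (tensorIdx p l → F),
      (∀ γ : Matrix.SpecialLinearGroup (Fin 2) F, ∀ v ∈ V,
        (rhoTensor p l (γ : Matrix (Fin 2) (Fin 2) F)).mulVec v ∈ V) →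
      V = ⊥ ∨ V = ⊤ := by
  intro V hV
  have hwt := tensorIdxWeight_injective hp.one_lt l
  have htop (i : tensorIdx p l) : tensorIdxWeight p l i ≤ tensorIdxWeight p l ⊤ :=
    tensorIdxWeight_mono p l le_top
  have hcard : tensorIdxWeight p l ⊤ < Fintype.card F := (tensorIdxWeight_top p l).symm ▸ hl
  have hlower (x : F) := hV ⟨!![1, 0; x, 1], by simp⟩
  have hupper (x : F) := hV ⟨!![1, x; 0, 1], by simp⟩
  simp only [rhoTensor_lowerUnipotent hp.ne_zero, rhoTensor_upperUnipotent hp.ne_zero]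
    at hlower hupper
  refine or_iff_not_imp_left.mpr fun hV0 => ?_
  obtain ⟨v, hv, hv0⟩ := V.ne_bot_iff.mp hV0
  have hsingle := V.single_top_mem_of_weight_raising hwt htop hcard _
    (fun _ _ hc => tensorIdxWeight_mono p l (le_of_rhoLowerCoeff_ne_zero hc))
    (fun i => by simp [rhoLowerCoeff_top_left]) hlower hv hv0
  exact V.eq_top_of_weight_lowering hwt htop hcard _ (rhoUpperCoeff_top_right_ne_zero hp l)
    hupper hsingle
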